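/- Let (P_n) be a sequence of orthogonal projections on a Hilbert space H converging strongly to the identity, and let A be a bounded operator on H. If there exist n₀ and C > 0 such that for all n ≥ n₀ the operators P_n A P_n : Im P_n → Im P_n are invertible with ‖(P_n A P_n)^{−1} P_n‖ ≤ C, then A is injective and has closed range; if moreover A* satisfies the same hypothesis, then A is invertible. -/

import Mathlib

open Filter Topology

/-- Stability of the Galerkin sequence `(PₙAPₙ)`: for `n ≥ n₀` the operators
`PₙAPₙ : Im Pₙ → Im Pₙ` are invertible with `‖(PₙAPₙ)⁻¹Pₙ‖ ≤ C`, expressed via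
operators `B = (PₙAPₙ)⁻¹Pₙ` on `H`. -/
def GalerkinStable {H : Type*} [NormedAddCommGroup H] [InnerProductSpace ℂ H]
    [CompleteSpace H] (P : ℕ → H →L[ℂ] H) (A : H →L[ℂ] H) (n₀ : ℕ) (C : ℝ) : Prop :=
  ∀ n ≥ n₀, ∃ B : H →L[ℂ] H,
    (∀ x : H, B x = B (P n x)) ∧
    (∀ x : H, B (P n (A (P n x))) = P n x) ∧
    (∀ x : H, P n (A (P n (B x))) = P n x) ∧
    ‖B‖ ≤ C

/-- The closed range of `T` has orthogonal complement `ker T† = 0`, so `T` is onto. -/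
theorem ContinuousLinearMap.isUnit_of_antilipschitzWith_of_injective_adjoint
    {𝕜 E : Type*} [RCLike 𝕜] [NormedAddCommGroup E] [InnerProductSpace 𝕜 E] [CompleteSpace E]
    {T : E →L[𝕜] E} {c : NNReal} (hT : AntilipschitzWith c T)
    (hT' : Function.Injective (ContinuousLinearMap.adjoint T)) : IsUnit T := by
  rw [isUnit_iff_bijective, bijective_iff_dense_range_and_antilipschitz]
  refine ⟨?_, c, hT⟩
  rw [Submodule.topologicalClosure_eq_top_iff, T.orthogonal_range, LinearMap.ker_eq_bot]
  exact hT'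

namespace GalerkinStable

variable {H : Type*} [NormedAddCommGroup H] [InnerProductSpace ℂ H] [CompleteSpace H]
  {P : ℕ → H →L[ℂ] H} {A : H →L[ℂ] H} {n₀ : ℕ} {C : ℝ}

/-- The bound `‖Pₙx‖ ≤ C ‖APₙx‖` on the finite sections passes to the limit `Pₙx → x`. -/
theorem norm_le_mul_norm_apply (hstab : GalerkinStable P A n₀ C) (hP1 : ∀ n, ‖P n‖ ≤ 1)
    (hP : ∀ x : H, Tendsto (fun n => P n x) atTop (𝓝 x)) (x : H) : ‖x‖ ≤ C * ‖A x‖ := by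
  have hsection : ∀ n ≥ n₀, ‖P n x‖ ≤ C * ‖A (P n x)‖ := by
    intro n hn
    obtain ⟨B, -, hBA, -, hBC⟩ := hstab n hn
    have hC : 0 ≤ C := (norm_nonneg B).trans hBC
    calc ‖P n x‖ = ‖B (P n (A (P n x)))‖ := by rw [hBA]
      _ ≤ C * ‖P n (A (P n x))‖ := B.le_of_opNorm_le hBC _
      _ ≤ C * ‖A (P n x)‖ := by
          gcongr
          simpa using (P n).le_of_opNorm_le (hP1 n) (A (P n x))
  have hAP : Tendsto (fun n => A (P n x)) atTop (𝓝 (A x)) :=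
    (A.continuous.tendsto x).comp (hP x)
  exact le_of_tendsto_of_tendsto (hP x).norm (hAP.norm.const_mul C)
    (eventually_atTop.mpr ⟨n₀, hsection⟩)

theorem antilipschitzWith (hstab : GalerkinStable P A n₀ C) (hP1 : ∀ n, ‖P n‖ ≤ 1)
    (hP : ∀ x : H, Tendsto (fun n => P n x) atTop (𝓝 x)) : AntilipschitzWith C.toNNReal A :=
  A.antilipschitz_of_bound fun x =>
    (hstab.norm_le_mul_norm_apply hP1 hP x).trans
      (mul_le_mul_of_nonneg_right (Real.le_coe_toNNReal C) (norm_nonneg _))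

end GalerkinStable

theorem stability_implies_invertibility_general {H : Type*} [NormedAddCommGroup H]
    [InnerProductSpace ℂ H] [CompleteSpace H]
    (P : ℕ → H →L[ℂ] H)
    (hproj : ∀ n, IsIdempotentElem (P n) ∧ IsSelfAdjoint (P n))
    (hP : ∀ x : H, Tendsto (fun n => P n x) atTop (𝓝 x))
    (A : H →L[ℂ] H) (n₀ : ℕ) (C : ℝ)
    (hstab : GalerkinStable P A n₀ C) :
    Function.Injective A ∧ IsClosed (Set.range A) ∧
      ((∃ n₀' C', 0 < C' ∧ GalerkinStable P (ContinuousLinearMap.adjoint A) n₀' C') →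
        IsUnit A) := by
  have hP1 : ∀ n, ‖P n‖ ≤ 1 := fun n => IsStarProjection.norm_le _ ⟨(hproj n).1, (hproj n).2⟩
  have hanti := hstab.antilipschitzWith hP1 hP
  refine ⟨hanti.injective, hanti.isClosed_range A.uniformContinuous, ?_⟩
  rintro ⟨n₀', C', -, hstab'⟩
  exact A.isUnit_of_antilipschitzWith_of_injective_adjoint hanti
    (hstab'.antilipschitzWith hP1 hP).injective

theorem stability_implies_invertibility {H : Type*} [NormedAddCommGroup H]
    [InnerProductSpace ℂ H] [CompleteSpace H]
    (P : ℕ → H →L[ℂ] H)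
    (hproj : ∀ n, IsIdempotentElem (P n) ∧ IsSelfAdjoint (P n))
    (hP : ∀ x : H, Tendsto (fun n => P n x) atTop (𝓝 x))
    (A : H →L[ℂ] H) (n₀ : ℕ) (C : ℝ) (hC : 0 < C)
    (hstab : GalerkinStable P A n₀ C) :
    Function.Injective A ∧ IsClosed (Set.range A) ∧
      ((∃ n₀' C', 0 < C' ∧ GalerkinStable P (ContinuousLinearMap.adjoint A) n₀' C') →
        IsUnit A) :=
  stability_implies_invertibility_general P hproj hP A n₀ C hstab
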